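/- Let k ∈ ℤ+, let w be a normalized quasimetric weight function, and let P be a forest with at least 158k² red characters occurring in forests F and G at positions p_F and p_G (i.e., F[p_F..p_F+|P|) = P = G[p_G..p_G+|P|)) with |p_F − p_G| ≤ 2k. Let A = (f_t, g_t)_{t=0}^m be a forest alignment of F onto G with ted^w_A(F,G) ≤ k, let a be the smallest index such that f_a ≥ p_F or g_a ≥ p_G, and let b be the smallest index such that f_b ≥ p_F+|P| and g_b ≥ p_G+|P|. Then there exists t ∈ [a..b] such that f_t − g_t = p_F − p_G. -/

import Mathlib

open scoped NNReal ENNReal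

attribute [local instance] Classical.propDecidable

/-- A labeled parenthesis over the alphabet `α`: `(true, a)` is the opening
parenthesis with label `a`, and `(false, a)` is the closing parenthesis. -/
abbrev Paren (α : Type*) := Bool × α

/-- Balanced strings of labeled parentheses (forests), following Definition 2.1:
the smallest set containing the empty string, closed under concatenation, and
containing `(_a · F · )_a` for every forest `F` and label `a`. -/
inductive IsForest {α : Type*} : List (Paren α) → Prop
  | nil : IsForest []
  | append {F G : List (Paren α)} : IsForest F → IsForest G → IsForest (F ++ G)
  | wrap {F : List (Paren α)} (a : α) : IsForest F → IsForest ((true, a) :: F ++ [(false, a)])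

/-- The fragment `l[i..j)` of a list. -/
def frag {β : Type*} (l : List β) (i j : ℕ) : List β := (l.take j).drop i

/-- `IsNode F i j` means that `[i..j]` is a node of the forest `F`: `F[i]` is an
opening parenthesis, `F[j]` is a closing parenthesis with the same label,
and `F(i..j)` is balanced. -/
def IsNode {α : Type*} (F : List (Paren α)) (i j : ℕ) : Prop :=
  i < j ∧ j < F.length ∧ (∃ a : α, F[i]? = some (true, a) ∧ F[j]? = some (false, a)) ∧
    IsForest (frag F (i + 1) j)

/-- `MateRel F i j` holds when positions `i` and `j` are the paired parentheses
of a node of `F` (in either order); `j` is the mate of `i`. -/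
def MateRel {α : Type*} (F : List (Paren α)) (i j : ℕ) : Prop :=
  IsNode F i j ∨ IsNode F j i

/-- A single edge of the alignment graph: horizontal, vertical, or diagonal. -/
def AlignStep (p q : ℕ × ℕ) : Prop :=
  q = (p.1 + 1, p.2) ∨ q = (p.1, p.2 + 1) ∨ q = (p.1 + 1, p.2 + 1)

/-- An alignment of `X[x..x')` onto `Y[y..y')` is a path in the alignment graph
from `(x, y)` to `(x', y')`, interpreted as its sequence of vertices. -/
def IsAlignment (x x' y y' : ℕ) (path : List (ℕ × ℕ)) : Prop :=
  path.head? = some (x, y) ∧ path.getLast? = some (x', y') ∧ path.Chain' AlignStep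

/-- The alignment (path) aligns character `f` of `X` to character `g` of `Y`
(a diagonal edge `(f, g) → (f + 1, g + 1)`). -/
def AlignsAt (path : List (ℕ × ℕ)) (f g : ℕ) : Prop :=
  ∃ t, path[t]? = some (f, g) ∧ path[t + 1]? = some (f + 1, g + 1)

/-- The alignment deletes character `f` of `X` (a horizontal edge). -/
def DeletesAt (path : List (ℕ × ℕ)) (f : ℕ) : Prop :=
  ∃ t g, path[t]? = some (f, g) ∧ path[t + 1]? = some (f + 1, g)

/-- The alignment inserts character `g` of `Y` (a vertical edge). -/
def InsertsAt (path : List (ℕ × ℕ)) (g : ℕ) : Prop :=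
  ∃ t f, path[t]? = some (f, g) ∧ path[t + 1]? = some (f, g + 1)

/-- Consistency condition of forest alignments (Definition 2.6): whenever the
alignment aligns `F[f]` to `G[g]`, it also aligns the mate of `F[f]` to the mate
of `G[g]`.  An alignment satisfying this condition is a forest alignment. -/
def Consistent {α : Type*} (F G : List (Paren α)) (path : List (ℕ × ℕ)) : Prop :=
  ∀ f g f' g', AlignsAt path f g → MateRel F f f' → MateRel G g g' → AlignsAt path f' g'

/-- The width of the alignment is at most `m`: every vertex `(x, y)` on the path
satisfies `|x - y| ≤ m`. -/
def WidthLE (m : ℕ) (path : List (ℕ × ℕ)) : Prop :=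
  ∀ p ∈ path, p.1 ≤ p.2 + m ∧ p.2 ≤ p.1 + m

/-- The label of the `i`-th character of `X` (as an element of `Σ ∪ {ε}`,
encoded by `Option α`; out-of-range positions give `ε`). -/
def lbl {α : Type*} (X : List (Paren α)) (i : ℕ) : Option α := (X[i]?).map Prod.snd

/-- Cost of an alignment path with respect to the weight function `w̃(p, q) = ½·w(λ(p), λ(q))`:
horizontal edges cost `½·w(λ(X[x]), ε)`, vertical edges `½·w(ε, λ(Y[y]))`, and
diagonal edges `½·w(λ(X[x]), λ(Y[y]))`. -/
noncomputable def pathCost {α : Type*} (w : Option α → Option α → ℝ≥0)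
    (X Y : List (Paren α)) : List (ℕ × ℕ) → ℝ≥0
  | [] => 0
  | [_] => 0
  | p :: q :: rest =>
      (if q.1 = p.1 + 1 ∧ q.2 = p.2 then (1 / 2 : ℝ≥0) * w (lbl X p.1) none
       else if q.1 = p.1 ∧ q.2 = p.2 + 1 then (1 / 2 : ℝ≥0) * w none (lbl Y p.2)
       else (1 / 2 : ℝ≥0) * w (lbl X p.1) (lbl Y p.2)) + pathCost w X Y (q :: rest)

/-- A weight function `w : (Σ ∪ {ε})² → ℝ≥0` is normalized if `w(a, a) = 0` and
`w(a, b) ≥ 1` for distinct `a, b`. -/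
def Normalized {α : Type*} (w : Option α → Option α → ℝ≥0) : Prop :=
  (∀ a, w a a = 0) ∧ ∀ a b, a ≠ b → 1 ≤ w a b

/-- A weight function satisfies the triangle inequality (is a quasimetric). -/
def Quasimetric {α : Type*} (w : Option α → Option α → ℝ≥0) : Prop :=
  ∀ a b c, w a c ≤ w a b + w b c

/-- The weighted tree edit distance `ted^w(F[f..f'), G[g..g'))`: the minimum cost
of a forest alignment of the fragment `F[f..f')` onto the fragment `G[g..g')`
(`∞` if no forest alignment exists). -/
noncomputable def tedFrag {α : Type*} (w : Option α → Option α → ℝ≥0)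
    (F G : List (Paren α)) (f f' g g' : ℕ) : ℝ≥0∞ :=
  ⨅ p : { p : List (ℕ × ℕ) // IsAlignment f f' g g' p ∧ Consistent F G p },
    (pathCost w F G p.1 : ℝ≥0∞)

/-- The bounded tree edit distance `bted_k^w(F[f..f'), G[g..g'))`: the minimum
cost of a forest alignment of width at most `2k` (`∞` if none exists). -/
noncomputable def btedFrag {α : Type*} (k : ℕ) (w : Option α → Option α → ℝ≥0)
    (F G : List (Paren α)) (f f' g g' : ℕ) : ℝ≥0∞ :=
  ⨅ p : { p : List (ℕ × ℕ) //
      IsAlignment f f' g g' p ∧ Consistent F G p ∧ WidthLE (2 * k) p },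
    (pathCost w F G p.1 : ℝ≥0∞)

/-- A string `S` over `P_Σ` is a periodic block (Definition 5.4): `|S| ≥ 42k` and
`S` has a string period of length at most `4k` containing equally many opening
and closing parentheses. -/
def IsPeriodicBlock {α : Type*} (k : ℕ) (S : List (Paren α)) : Prop :=
  42 * k ≤ S.length ∧ ∃ p, 0 < p ∧ p ≤ 4 * k ∧
    (∀ i, i + p < S.length → S[i]? = S[i + p]?) ∧
    (S.take p).countP (fun c => c.1) = (S.take p).countP (fun c => !c.1)

/-- A character `T[i]` is black (Definition 5.5) if there exists a periodic block
`T[l..r)` of `T` such that `i ∈ [l + 5k..r − 5k)`; otherwise it is red. -/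
def IsBlack {α : Type*} (k : ℕ) (T : List (Paren α)) (i : ℕ) : Prop :=
  ∃ l r, r ≤ T.length ∧ l + 5 * k ≤ i ∧ i + 5 * k < r ∧ IsPeriodicBlock k (frag T l r)

/-- The number of red characters of `T`. -/
noncomputable def redCount {α : Type*} (k : ℕ) (T : List (Paren α)) : ℕ :=
  ((Finset.range T.length).filter fun i => ¬ IsBlack k T i).card


/-!
Suppose no vertex of the alignment between `a` and `b` lies on the diagonal through the two
occurrences of `P`. The offset `f - g` changes by at most one per step, so all vertices in the
window of the occurrences lie strictly on one side, say `f - g > p_F - p_G` (the other side is the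
mirror image, with `F` and `G` swapped). Then the alignment crosses each position `j` of `P` in `G`
at a position `σ j` of `P` in `F` with `j < σ j ≤ j + 4k`. Where this crossing is a cheap diagonal
step, consistency forces `P[σ j] = P[j]` and keeps the mates of `P[j]` and `P[σ j]` in the same
order. Unmatched positions and changes of the shift `σ j - j` each cost at least `1/2`, so there
are at most `2k` of them. Between them, `P` contains runs of `42k + 1` positions shifted onto
themselves by some `s ≤ 4k`; the order of mates forces a period of such a run to be balanced, so
the run is a periodic block and its interior is black. Hence fewer than `158k²` characters of `P`
are red.
-/

section

open Finset

variable {α : Type*}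

namespace Paren

def balance (l : List (Paren α)) : ℤ := (l.countP fun c => c.1) - (l.countP fun c => !c.1)

def height (X : List (Paren α)) (t : ℕ) : ℤ := balance (X.take t)

@[simp] lemma balance_nil : balance ([] : List (Paren α)) = 0 := by simp [balance]

@[simp] lemma balance_append (l l' : List (Paren α)) :
    balance (l ++ l') = balance l + balance l' := by
  simp only [balance, List.countP_append]; push_cast; ring

@[simp] lemma balance_singleton (c : Paren α) : balance [c] = if c.1 then 1 else -1 := by
  rcases c with ⟨_ | _, _⟩ <;> simp [balance]

@[simp] lemma balance_cons (c : Paren α) (l : List (Paren α)) :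
    balance (c :: l) = (if c.1 then 1 else -1) + balance l := by
  rw [← balance_singleton, ← balance_append, List.singleton_append]

@[simp] lemma height_zero (X : List (Paren α)) : height X 0 = 0 := by simp [height]

lemma height_append (X Y : List (Paren α)) (t : ℕ) :
    height (X ++ Y) t = height X t + height Y (t - X.length) := by
  simp only [height, List.take_append, balance_append]

lemma height_succ (X : List (Paren α)) {t : ℕ} (h : t < X.length) :
    height X (t + 1) = height X t + if X[t].1 then 1 else -1 := by
  rw [height, height, List.take_succ_eq_append_getElem h, balance_append, balance_singleton]

lemma height_succ_of_open {X : List (Paren α)} {t : ℕ} {a : α} (h : X[t]? = some (true, a)) :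
    height X (t + 1) = height X t + 1 := by
  obtain ⟨ht, hX⟩ := List.getElem?_eq_some_iff.mp h
  simp [height_succ X ht, hX]

lemma height_succ_of_close {X : List (Paren α)} {t : ℕ} {a : α} (h : X[t]? = some (false, a)) :
    height X (t + 1) = height X t - 1 := by
  obtain ⟨ht, hX⟩ := List.getElem?_eq_some_iff.mp h
  simp [height_succ X ht, hX, sub_eq_add_neg]

lemma exists_eq_open_of_height_lt {X : List (Paren α)} {t : ℕ}
    (h : height X t < height X (t + 1)) : ∃ a, X[t]? = some (true, a) := by
  have ht : t < X.length := by
    by_contra! ht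
    simp [height, List.take_of_length_le ht, List.take_of_length_le (ht.trans t.le_succ)] at h
  rw [height_succ X ht] at h
  refine ⟨X[t].2, ?_⟩
  rw [List.getElem?_eq_getElem ht]
  split_ifs at h with h' <;> simp_all [Prod.ext_iff]

lemma exists_eq_close_of_height_lt {X : List (Paren α)} {t : ℕ}
    (h : height X (t + 1) < height X t) : ∃ a, X[t]? = some (false, a) := by
  have ht : t < X.length := by
    by_contra! ht
    simp [height, List.take_of_length_le ht, List.take_of_length_le (ht.trans t.le_succ)] at h
  rw [height_succ X ht] at h
  refine ⟨X[t].2, ?_⟩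
  rw [List.getElem?_eq_getElem ht]
  split_ifs at h with h' <;> simp_all [Prod.ext_iff]

lemma height_eq_add_balance_frag (X : List (Paren α)) {s t : ℕ} (h : s ≤ t) :
    height X t = height X s + balance (frag X s t) := by
  rw [height, height, frag, ← balance_append]
  conv_lhs => rw [← List.take_append_drop s (X.take t), List.take_take, min_eq_left h]

end Paren

open Paren

lemma frag_getElem? (X : List α) (s t n : ℕ) :
    (frag X s t)[n]? = if s + n < t then X[s + n]? else none := by
  rw [frag, List.getElem?_drop, List.getElem?_take]

lemma frag_length (X : List α) (s t : ℕ) : (frag X s t).length = min t X.length - s := by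
  simp [frag]

lemma take_frag (X : List α) {s t : ℕ} (u : ℕ) (h : s + u ≤ t) :
    (frag X s t).take u = frag X s (s + u) := by
  simp only [frag, List.take_drop, List.take_take]
  congr 2
  omega

lemma IsForest.balance_eq_zero {X : List (Paren α)} (h : IsForest X) : balance X = 0 := by
  induction h with
  | nil => simp
  | append _ _ ih₁ ih₂ => simp [ih₁, ih₂]
  | wrap a _ ih => simp [ih]

lemma neg_one_le_height_singleton (c : Paren α) (t : ℕ) : -1 ≤ height [c] t := by
  rcases t with _ | t
  · simp
  · simp only [height, List.take_succ_cons, List.take_nil, balance_singleton]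
    split_ifs <;> norm_num

lemma IsForest.height_nonneg {X : List (Paren α)} (h : IsForest X) (t : ℕ) :
    0 ≤ height X t := by
  induction h generalizing t with
  | nil => simp [height]
  | @append F G _ _ ih₁ ih₂ =>
    rw [height_append]; linarith [ih₁ t, ih₂ (t - F.length)]
  | @wrap F a _ ih =>
    change 0 ≤ height ([(true, a)] ++ (F ++ [(false, a)])) t
    rcases t with _ | t
    · simp
    · rw [height_append, height_append]
      have h₁ : height [((true, a) : Paren α)] (t + 1) = 1 := by simp [height]
      have := neg_one_le_height_singleton ((false, a) : Paren α) (t + 1 - 1 - F.length)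
      simp only [h₁, List.length_singleton]
      linarith [ih (t + 1 - 1)]

lemma getElem?_append_append {A X B : List α} {i : ℕ} (h : i < X.length) :
    (A ++ X ++ B)[A.length + i]? = X[i]? := by
  rw [List.append_assoc, List.getElem?_append_right (by omega), Nat.add_sub_cancel_left,
    List.getElem?_append_left h]

namespace IsNode

variable {X : List (Paren α)} {i j : ℕ}

lemma height_succ_right (h : IsNode X i j) : height X (j + 1) = height X i := by
  obtain ⟨hij, -, ⟨a, hi, hj⟩, hF⟩ := h
  rw [height_succ_of_close hj, height_eq_add_balance_frag X hij, hF.balance_eq_zero,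
    height_succ_of_open hi]
  ring

lemma height_lt (h : IsNode X i j) {t : ℕ} (hit : i < t) (htj : t ≤ j) :
    height X i < height X t := by
  obtain ⟨-, -, ⟨a, hi, -⟩, hF⟩ := h
  have hfrag : balance (frag X (i + 1) t) = height (frag X (i + 1) j) (t - (i + 1)) := by
    rw [height, take_frag X _ (by omega), Nat.add_sub_cancel' hit]
  rw [height_eq_add_balance_frag X hit, height_succ_of_open hi, hfrag]
  linarith [hF.height_nonneg (t - (i + 1))]

lemma append (h : IsNode X i j) (A B : List (Paren α)) :
    IsNode (A ++ X ++ B) (A.length + i) (A.length + j) := by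
  obtain ⟨hij, hj, ⟨a, hi, hj'⟩, hF⟩ := h
  refine ⟨by omega, by simp; omega, ⟨a, by rwa [getElem?_append_append (hij.trans hj)],
    by rwa [getElem?_append_append hj]⟩, ?_⟩
  convert hF using 1
  refine List.ext_getElem? fun n => ?_
  rw [frag_getElem?, frag_getElem?]
  by_cases hn : i + 1 + n < j
  · rw [if_pos (by omega), if_pos hn, show A.length + i + 1 + n = A.length + (i + 1 + n) by ring,
      getElem?_append_append (by omega)]
  · rw [if_neg (by omega), if_neg hn]

lemma left_unique {i' : ℕ} (h : IsNode X i j) (h' : IsNode X i' j) : i = i' := by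
  by_contra hne
  wlog hlt : i < i' generalizing i i'
  · exact this h' h (Ne.symm hne) (by omega)
  have := h.height_lt hlt h'.1.le
  have := h.height_succ_right
  have := h'.height_succ_right
  omega

lemma close_lt_close {o m o' m' : ℕ} (h : IsNode X o m) (h' : IsNode X o' m') (hoo : o < o')
    (hheight : ∀ t, o < t → t ≤ o' → height X o < height X t) : m' < m := by
  have hom : o' < m := by
    by_contra! hmo
    rcases hmo.eq_or_lt with rfl | hlt
    · obtain ⟨a, -, hclose⟩ := h.2.2.1
      obtain ⟨a', hopen, -⟩ := h'.2.2.1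
      rw [hopen] at hclose
      simp at hclose
    · have := hheight (m + 1) (by linarith [h.1]) hlt
      have := h.height_succ_right
      omega
  by_contra! hmm
  rcases hmm.eq_or_lt with rfl | hlt
  · exact absurd (h.left_unique h') hoo.ne
  have := h'.height_lt (show o' < m + 1 by omega) (by omega)
  have := hheight o' hoo le_rfl
  have := h.height_succ_right
  omega

lemma lt_of_forall_height_gt {m' c' : ℕ} (h' : IsNode X m' c') {m : ℕ}
    (hheight : ∀ t, m ≤ t → t ≤ c' → height X (c' + 1) < height X t) : m' < m := by
  by_contra! hmm
  have := h'.height_succ_right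
  have := hheight m' hmm h'.1.le
  omega

lemma wrap {F : List (Paren α)} (a : α) (hF : IsForest F) :
    IsNode ((true, a) :: F ++ [(false, a)]) 0 (F.length + 1) := by
  refine ⟨by omega, by simp, ⟨a, rfl, by simp⟩, ?_⟩
  convert hF using 1
  refine List.ext_getElem? fun n => ?_
  rw [frag_getElem?]
  split_ifs with hn
  · rw [show 1 + n = n + 1 by omega, List.cons_append, List.getElem?_cons_succ,
      List.getElem?_append_left (by omega)]
  · exact (List.getElem?_eq_none (by omega)).symm

end IsNode

namespace MateRel

variable {X : List (Paren α)} {i j : ℕ}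

lemma append (h : MateRel X i j) (A B : List (Paren α)) :
    MateRel (A ++ X ++ B) (A.length + i) (A.length + j) :=
  h.imp (·.append A B) (·.append A B)

lemma lt_length (h : MateRel X i j) : j < X.length := by
  rcases h with h | h
  · exact h.2.1
  · exact h.1.trans h.2.1

lemma isNode_of_open {a : α} (h : MateRel X i j) (hi : X[i]? = some (true, a)) :
    IsNode X i j := by
  refine h.resolve_right fun h' => ?_
  obtain ⟨b, -, hclose⟩ := h'.2.2.1
  simp [hi] at hclose

lemma isNode_of_close {a : α} (h : MateRel X i j) (hi : X[i]? = some (false, a)) :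
    IsNode X j i := by
  refine h.resolve_left fun h' => ?_
  obtain ⟨b, hopen, -⟩ := h'.2.2.1
  simp [hi] at hopen

lemma lt_iff (h : MateRel X i j) : i < j ↔ X[i]?.map Prod.fst = some true := by
  rcases h with ⟨hij, -, ⟨a, hi, -⟩, -⟩ | ⟨hji, -, ⟨a, -, hi⟩, -⟩
  · simp [hij, hi]
  · simp [hi, Nat.not_lt.mpr hji.le]

end MateRel

lemma IsForest.exists_mateRel {X : List (Paren α)} (h : IsForest X) :
    ∀ i < X.length, ∃ j, MateRel X i j := by
  have shift : ∀ {Y : List (Paren α)} {i} (A B : List (Paren α)), (∃ j, MateRel Y i j) →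
      ∃ j, MateRel (A ++ Y ++ B) (A.length + i) j :=
    fun A B ⟨j, hj⟩ => ⟨_, hj.append A B⟩
  induction h with
  | nil => simp
  | @append F G _ _ ih₁ ih₂ =>
    intro i hi
    rcases lt_or_ge i F.length with hiF | hiF
    · simpa using shift [] G (ih₁ i hiF)
    · obtain ⟨d, rfl⟩ := Nat.exists_eq_add_of_le hiF
      simpa using shift F [] (ih₂ d (by simp at hi; omega))
  | @wrap F a hF ih =>
    intro i hi
    simp only [List.length_append, List.length_cons, List.length_nil] at hi
    rcases Nat.eq_zero_or_pos i with rfl | hi0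
    · exact ⟨_, Or.inl (IsNode.wrap a hF)⟩
    rcases Nat.lt_or_ge i (F.length + 1) with hiF | hiF
    · obtain ⟨d, rfl⟩ := Nat.exists_eq_add_of_lt hi0
      simpa [add_comm] using shift [(true, a)] [(false, a)] (ih d (by omega))
    · exact ⟨0, Or.inr (by convert IsNode.wrap a hF; omega)⟩

lemma exists_first_argmin (f : ℕ → ℤ) {lo hi : ℕ} (h : lo ≤ hi) :
    ∃ j, lo ≤ j ∧ j ≤ hi ∧ (∀ u, lo ≤ u → u ≤ hi → f j ≤ f u) ∧
      ∀ u, lo ≤ u → u < j → f j < f u := by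
  obtain ⟨j₀, hj₀, hmin⟩ := (Icc lo hi).exists_min_image f (nonempty_Icc.mpr h)
  have hex : ∃ j, lo ≤ j ∧ j ≤ hi ∧ f j = f j₀ := ⟨j₀, by simpa using hj₀⟩
  obtain ⟨hlo, hhi, heq⟩ := Nat.find_spec hex
  refine ⟨Nat.find hex, hlo, hhi, fun u hu hu' => ?_, fun u hu hlt => ?_⟩ <;> rw [heq]
  · exact hmin u (mem_Icc.mpr ⟨hu, hu'⟩)
  · exact (hmin u (mem_Icc.mpr ⟨hu, by omega⟩)).lt_of_ne'
      fun hu' => Nat.find_min hex hlt ⟨hu, by omega, hu'⟩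

lemma exists_last_argmin (f : ℕ → ℤ) {lo hi : ℕ} (h : lo ≤ hi) :
    ∃ j, lo ≤ j ∧ j ≤ hi ∧ (∀ u, lo ≤ u → u ≤ hi → f j ≤ f u) ∧
      ∀ u, j < u → u ≤ hi → f j < f u := by
  obtain ⟨j₀, hj₀, hmin⟩ := (Icc lo hi).exists_min_image f (nonempty_Icc.mpr h)
  rw [mem_Icc] at hj₀
  set j := Nat.findGreatest (fun j => lo ≤ j ∧ f j = f j₀) hi
  obtain ⟨hlo, heq⟩ : lo ≤ j ∧ f j = f j₀ :=
    Nat.findGreatest_spec (P := fun j => lo ≤ j ∧ f j = f j₀) hj₀.2 ⟨hj₀.1, rfl⟩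
  refine ⟨j, hlo, Nat.findGreatest_le hi, fun u hu hu' => ?_, fun u hlt hu => ?_⟩ <;> rw [heq]
  · exact hmin u (mem_Icc.mpr ⟨hu, hu'⟩)
  · exact (hmin u (mem_Icc.mpr ⟨by omega, hu⟩)).lt_of_ne'
      fun hu' => Nat.findGreatest_is_greatest hlt hu ⟨by omega, hu'⟩

structure IsShiftedRun (P : List (Paren α)) (x s n : ℕ) : Prop where
  lt_length : x + n + s < P.length
  getElem?_add : ∀ j, x ≤ j → j ≤ x + n → P[j + s]? = P[j]?
  mate_lt : ∀ j, x ≤ j → j ≤ x + n → ∀ m m', MateRel P j m → MateRel P (j + s) m' → m < m'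

namespace IsShiftedRun

variable {P : List (Paren α)} {x s n : ℕ}

lemma height_add (hrun : IsShiftedRun P x s n) {u : ℕ} (hxu : x ≤ u) (hu : u ≤ x + n + 1) :
    height P (u + s) = height P u + (height P (x + s) - height P x) := by
  induction u, hxu using Nat.le_induction with
  | base => ring
  | succ u hxu ih =>
    have hlt : u + s < P.length := by linarith [hrun.lt_length]
    have hchar := hrun.getElem?_add u hxu (by omega)
    rw [List.getElem?_eq_getElem hlt, List.getElem?_eq_getElem (by omega), Option.some_inj]
      at hchar
    rw [show u + 1 + s = u + s + 1 by ring, height_succ P hlt, height_succ P (by omega),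
      ih (by omega), hchar]
    ring

/-- If the period lost height, the closing parenthesis `c` just before the first minimum of the
height on `[x+s, x+2s]` and its copy `c+s` would have nested nodes, against `mate_lt`. -/
lemma height_le_height_add (hrun : IsShiftedRun P x s n) (hP : IsForest P) (hsn : 2 * s ≤ n) :
    height P x ≤ height P (x + s) := by
  by_contra! hδ
  set δ := height P (x + s) - height P x
  obtain ⟨j, hjl, hjr, hmin, hfirst⟩ :=
    exists_first_argmin (height P) (show x + s ≤ x + 2 * s by omega)
  have hper : ∀ u, x ≤ u → u ≤ x + 2 * s → height P (u + s) = height P u + δ :=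
    fun u hu hu' => hrun.height_add hu (by omega)
  have hjx : x + s < j := by
    refine hjl.lt_of_ne fun hj => ?_
    have := hmin (x + 2 * s) (by omega) le_rfl
    have := hper (x + s) (by omega) (by omega)
    rw [← hj, show x + s + s = x + 2 * s by ring] at *
    omega
  obtain ⟨c, rfl⟩ := Nat.exists_eq_add_of_lt hjx
  set M := height P (x + s + c + 1)
  obtain ⟨a, hclose⟩ := exists_eq_close_of_height_lt (hfirst (x + s + c) (by omega) (by omega))
  have hclose' : P[x + s + c + s]? = some (false, a) := by
    rw [hrun.getElem?_add _ (by omega) (by omega), hclose]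
  obtain ⟨m, hm⟩ := hP.exists_mateRel _ (List.getElem?_eq_some_iff.mp hclose).1
  obtain ⟨m', hm'⟩ := hP.exists_mateRel _ (List.getElem?_eq_some_iff.mp hclose').1
  have hnode := hm.isNode_of_close hclose
  have hle : ∀ t, m ≤ t → t ≤ x + s + c + 1 → M ≤ height P t := fun t hmt ht => by
    rcases ht.eq_or_lt with rfl | ht
    · rfl
    rcases hmt.eq_or_lt with rfl | hmt
    · exact hnode.height_succ_right.le
    · exact hnode.height_succ_right.le.trans (hnode.height_lt hmt (by omega)).le
  have hnest : m' < m := (hm'.isNode_of_close hclose').lt_of_forall_height_gt fun t hmt ht => by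
    rw [show x + s + c + s + 1 = x + s + c + 1 + s by ring, hper _ (by omega) (by omega)]
    by_cases ht' : t ≤ x + s + c + 1
    · linarith [hle t hmt ht']
    by_cases hts : x + 2 * s ≤ t
    · have := hper (t - s) (by omega) (by omega)
      have := hfirst (t - s) (by omega) (by omega)
      rw [Nat.sub_add_cancel (by omega)] at *
      omega
    · linarith [hmin t (by omega) (by omega)]
  exact absurd (hrun.mate_lt _ (by omega) (by omega) m m' hm hm') (by omega)

/-- If the period gained height, the opening parenthesis at the last minimum of the height on
`[x+s, x+2s]` and its copy `s` positions later would have nested nodes, against `mate_lt`. -/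
lemma height_add_le_height (hrun : IsShiftedRun P x s n) (hP : IsForest P) (hs : 0 < s)
    (hsn : 2 * s ≤ n) : height P (x + s) ≤ height P x := by
  by_contra! hδ
  set δ := height P (x + s) - height P x
  obtain ⟨j, hjl, hjr, hmin, hlast⟩ :=
    exists_last_argmin (height P) (show x + s ≤ x + 2 * s by omega)
  have hper : ∀ u, x ≤ u → u ≤ x + 2 * s → height P (u + s) = height P u + δ :=
    fun u hu hu' => hrun.height_add hu (by omega)
  have hjx : j < x + 2 * s := by
    refine hjr.lt_of_ne fun hj => ?_
    have := hmin (x + s) le_rfl (by omega)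
    have := hper (x + s) (by omega) (by omega)
    rw [hj, show x + s + s = x + 2 * s by ring] at *
    omega
  obtain ⟨a, hopen⟩ := exists_eq_open_of_height_lt (hlast (j + 1) (by omega) (by omega))
  have hopen' : P[j + s]? = some (true, a) := by
    rw [hrun.getElem?_add _ (by omega) (by omega), hopen]
  obtain ⟨m, hm⟩ := hP.exists_mateRel _ (List.getElem?_eq_some_iff.mp hopen).1
  obtain ⟨m', hm'⟩ := hP.exists_mateRel _ (List.getElem?_eq_some_iff.mp hopen').1
  have hnest : m' < m := (hm.isNode_of_open hopen).close_lt_close (hm'.isNode_of_open hopen')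
    (by omega) fun t hjt ht => by
      by_cases hts : t ≤ x + 2 * s
      · exact hlast t hjt hts
      · have := hper (t - s) (by omega) (by omega)
        have := hmin (t - s) (by omega) (by omega)
        rw [Nat.sub_add_cancel (by omega)] at *
        omega
  exact absurd (hrun.mate_lt _ (by omega) (by omega) m m' hm hm') (by omega)

lemma isPeriodicBlock {k : ℕ} (hrun : IsShiftedRun P x s n) (hP : IsForest P) (hs : 0 < s)
    (hsk : s ≤ 4 * k) (hsn : 2 * s ≤ n) (hkn : 42 * k ≤ n + s + 1) :
    IsPeriodicBlock k (frag P x (x + n + s + 1)) := by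
  have hlen : (frag P x (x + n + s + 1)).length = n + s + 1 := by
    rw [frag_length]; have := hrun.lt_length; omega
  refine ⟨by omega, s, hs, hsk, fun i hi => ?_, ?_⟩
  · rw [frag_getElem?, frag_getElem?, if_pos (by omega), if_pos (by omega), ← add_assoc,
      hrun.getElem?_add _ (by omega) (by omega)]
  · have hbal : balance (frag P x (x + s)) = 0 := by
      have := height_eq_add_balance_frag P (show x ≤ x + s by omega)
      linarith [hrun.height_le_height_add hP hsn, hrun.height_add_le_height hP hs hsn]
    rw [take_frag P s (by omega)]
    unfold balance at hbal
    omega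

lemma isBlack {k : ℕ} (hrun : IsShiftedRun P x s (42 * k)) (hP : IsForest P) (hs : 0 < s)
    (hsk : s ≤ 4 * k) {i : ℕ} (hxi : x + 5 * k ≤ i) (hi : i ≤ x + 37 * k) : IsBlack k P i :=
  ⟨x, x + 42 * k + s + 1, by linarith [hrun.lt_length], hxi, by omega,
    hrun.isPeriodicBlock hP hs hsk (by omega) (by omega)⟩

end IsShiftedRun

structure IsForwardMatching (k : ℕ) (P : List (Paren α)) (matched : ℕ → Prop) (σ : ℕ → ℕ) :
    Prop where
  lt_shift : ∀ j < P.length, matched j → j < σ j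
  shift_le : ∀ j < P.length, matched j → σ j ≤ j + 4 * k
  getElem?_shift : ∀ j < P.length, matched j → σ j < P.length → P[σ j]? = P[j]?
  mate_lt : ∀ j < P.length, matched j → σ j < P.length →
    ∀ m m', MateRel P j m → MateRel P (σ j) m' → m < m'

noncomputable def defects (n : ℕ) (matched : ℕ → Prop) (σ : ℕ → ℕ) : Finset ℕ :=
  (range n).filter fun j => ¬ matched j ∨ (j + 1 < n ∧ σ (j + 1) ≠ σ j + 1)

namespace IsForwardMatching

variable {k : ℕ} {P : List (Paren α)} {matched : ℕ → Prop} {σ : ℕ → ℕ}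

lemma isShiftedRun (hσ : IsForwardMatching k P matched σ) {x n : ℕ}
    (hlen : x + n + 4 * k < P.length)
    (hx : ∀ j, x ≤ j → j ≤ x + n → j ∉ defects P.length matched σ) :
    0 < σ x - x ∧ σ x - x ≤ 4 * k ∧ IsShiftedRun P x (σ x - x) n := by
  have hmatched : ∀ j, x ≤ j → j ≤ x + n → matched j := fun j hj hj' => by
    by_contra h
    exact hx j hj hj' (mem_filter.mpr ⟨mem_range.mpr (by omega), Or.inl h⟩)
  have hx0 := hσ.lt_shift x (by omega) (hmatched x le_rfl (by omega))
  have hxk := hσ.shift_le x (by omega) (hmatched x le_rfl (by omega))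
  have hshift : ∀ j, x ≤ j → j ≤ x + n → σ j = j + (σ x - x) := by
    intro j hj
    induction j, hj using Nat.le_induction with
    | base => omega
    | succ j hxj ih =>
      intro hj
      by_contra hne
      refine hx j hxj (by omega)
        (mem_filter.mpr ⟨mem_range.mpr (by omega), Or.inr ⟨by omega, ?_⟩⟩)
      rw [ih (by omega)]
      omega
  refine ⟨by omega, by omega, by omega, fun j hj hj' => ?_, fun j hj hj' => ?_⟩ <;>
    have hj := hshift j hj hj' <;> rw [← hj]
  · exact hσ.getElem?_shift j (by omega) (hmatched j (by omega) hj') (by omega)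
  · exact hσ.mate_lt j (by omega) (hmatched j (by omega) hj') (by omega)

lemma isBlack (hσ : IsForwardMatching k P matched σ) (hP : IsForest P) {i : ℕ}
    (hi : 5 * k ≤ i) (hiP : i + 41 * k < P.length)
    (hno : ∀ j ∈ defects P.length matched σ, j + 5 * k < i ∨ i + 37 * k < j) :
    IsBlack k P i := by
  obtain ⟨hs, hsk, hrun⟩ := hσ.isShiftedRun (x := i - 5 * k) (n := 42 * k) (by omega)
    fun j hj hj' hmem => by have := hno j hmem; omega
  exact hrun.isBlack hP hs hsk (by omega) (by omega)

lemma redCount_le (hσ : IsForwardMatching k P matched σ) (hP : IsForest P) :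
    redCount k P ≤ 46 * k + (defects P.length matched σ).card * (42 * k + 1) := by
  set D := defects P.length matched σ
  have hsub : (range P.length).filter (fun i => ¬ IsBlack k P i) ⊆
      range (5 * k) ∪ Ico (P.length - 41 * k) P.length ∪
        D.biUnion fun j => Icc (j - 37 * k) (j + 5 * k) := by
    intro i hi
    rw [mem_filter, mem_range] at hi
    by_contra hnot
    simp only [mem_union, mem_range, mem_Ico, mem_biUnion, mem_Icc, not_or, not_exists,
      not_and] at hnot
    exact hi.2 (hσ.isBlack hP (by omega) (by omega) fun j hj => by
      have := hnot.2 j hj; omega)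
  have hD : (D.biUnion fun j => Icc (j - 37 * k) (j + 5 * k)).card ≤ D.card * (42 * k + 1) :=
    card_biUnion_le.trans <| (sum_le_card_nsmul _ _ _ fun j _ => by rw [Nat.card_Icc]; omega)
      |>.trans_eq (smul_eq_mul _ _)
  have := card_le_card hsub
  have := card_union_le (range (5 * k) ∪ Ico (P.length - 41 * k) P.length)
    (D.biUnion fun j => Icc (j - 37 * k) (j + 5 * k))
  have := card_union_le (range (5 * k)) (Ico (P.length - 41 * k) P.length)
  simp only [card_range, Nat.card_Ico] at *
  unfold redCount
  omega

end IsForwardMatching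

/-- The `t`-th vertex of a path, with the junk value `(0, 0)` past its end. -/
def vertex (path : List (ℕ × ℕ)) (t : ℕ) : ℕ × ℕ := path.getD t (0, 0)

section Path

variable {path : List (ℕ × ℕ)} {t : ℕ}

lemma getElem?_eq_some_vertex (h : t < path.length) : path[t]? = some (vertex path t) := by
  rw [vertex, List.getD_eq_getElem _ _ h, List.getElem?_eq_getElem h]

lemma vertex_eq_of_getElem? {p : ℕ × ℕ} (h : path[t]? = some p) :
    t < path.length ∧ vertex path t = p := by
  obtain ⟨ht, hp⟩ := List.getElem?_eq_some_iff.mp h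
  exact ⟨ht, by rw [vertex, List.getD_eq_getElem _ _ ht, hp]⟩

lemma vertex_mem (h : t < path.length) : vertex path t ∈ path :=
  List.mem_of_getElem? (getElem?_eq_some_vertex h)

lemma alignStep_vertex (hch : path.IsChain AlignStep) (h : t + 1 < path.length) :
    AlignStep (vertex path t) (vertex path (t + 1)) := by
  rw [vertex, vertex, List.getD_eq_getElem _ _ h, List.getD_eq_getElem _ _ (by omega)]
  exact List.isChain_iff_getElem.mp hch t h

lemma vertex_mono (hch : path.IsChain AlignStep) {s : ℕ} (hst : s ≤ t)
    (h : t < path.length) :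
    (vertex path s).1 ≤ (vertex path t).1 ∧ (vertex path s).2 ≤ (vertex path t).2 := by
  induction t, hst using Nat.le_induction with
  | base => exact ⟨le_rfl, le_rfl⟩
  | succ t hst ih =>
    obtain ⟨ih₁, ih₂⟩ := ih (by omega)
    rcases alignStep_vertex hch h with h' | h' | h' <;> rw [h'] <;> constructor <;> simp <;> omega

lemma AlignsAt.lt_and_lt (hch : path.IsChain AlignStep) {f g f' g' : ℕ}
    (h : AlignsAt path f g) (h' : AlignsAt path f' g') (hlt : f < f' ∨ g < g') :
    f < f' ∧ g < g' := by
  obtain ⟨t, ht, ht₁⟩ := h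
  obtain ⟨t', ht', -⟩ := h'
  obtain ⟨hlen, hv⟩ := vertex_eq_of_getElem? ht
  obtain ⟨hlen₁, hv₁⟩ := vertex_eq_of_getElem? ht₁
  obtain ⟨hlen', hv'⟩ := vertex_eq_of_getElem? ht'
  rcases Nat.lt_or_ge t t' with htt | htt
  · have := vertex_mono hch htt hlen'
    rw [hv₁, hv'] at this
    exact ⟨this.1, this.2⟩
  · have := vertex_mono hch htt hlen
    rw [hv, hv'] at this
    simp only at this
    omega

noncomputable def rowCross (path : List (ℕ × ℕ)) (y : ℕ) : ℕ :=
  sInf {t | y < (vertex path (t + 1)).2}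

lemma rowCross_spec (hch : path.IsChain AlignStep) {y : ℕ} (h₀ : (vertex path 0).2 ≤ y)
    (hy : y < (vertex path t).2) :
    rowCross path y + 1 < path.length ∧ (vertex path (rowCross path y)).2 = y ∧
      (vertex path (rowCross path y + 1)).2 = y + 1 := by
  have ht : t ≠ 0 := by rintro rfl; omega
  obtain ⟨t, rfl⟩ := Nat.exists_eq_add_of_lt (Nat.pos_of_ne_zero ht)
  have hmem : y < (vertex path (rowCross path y + 1)).2 :=
    Nat.sInf_mem (s := {t | y < (vertex path (t + 1)).2}) ⟨t, by simpa using hy⟩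
  have hlen : rowCross path y + 1 < path.length := by
    by_contra! h
    rw [vertex, List.getD_eq_default _ _ h] at hmem
    exact Nat.not_lt_zero _ hmem
  have hbefore : (vertex path (rowCross path y)).2 ≤ y := by
    rcases hc : rowCross path y with _ | c
    · exact h₀
    · have := Nat.notMem_of_lt_sInf (s := {t | y < (vertex path (t + 1)).2})
        (show c < rowCross path y by omega)
      simpa using this
  refine ⟨hlen, ?_⟩
  rcases alignStep_vertex hch hlen with h | h | h <;> rw [h] at hmem ⊢ <;> simp at hmem ⊢ <;>
    omega

end Path

section Cost

variable {w : Option α → Option α → ℝ≥0} {X Y : List (Paren α)} {path : List (ℕ × ℕ)}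

noncomputable def stepCost (w : Option α → Option α → ℝ≥0) (X Y : List (Paren α))
    (p q : ℕ × ℕ) : ℝ≥0 :=
  if q.1 = p.1 + 1 ∧ q.2 = p.2 then (1 / 2 : ℝ≥0) * w (lbl X p.1) none
  else if q.1 = p.1 ∧ q.2 = p.2 + 1 then (1 / 2 : ℝ≥0) * w none (lbl Y p.2)
  else (1 / 2 : ℝ≥0) * w (lbl X p.1) (lbl Y p.2)

lemma stepCost_horizontal (p : ℕ × ℕ) :
    stepCost w X Y p (p.1 + 1, p.2) = 1 / 2 * w (lbl X p.1) none := by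
  simp [stepCost]

lemma stepCost_vertical (p : ℕ × ℕ) :
    stepCost w X Y p (p.1, p.2 + 1) = 1 / 2 * w none (lbl Y p.2) := by
  simp [stepCost]

lemma stepCost_diagonal (p : ℕ × ℕ) :
    stepCost w X Y p (p.1 + 1, p.2 + 1) = 1 / 2 * w (lbl X p.1) (lbl Y p.2) := by
  simp [stepCost]

lemma pathCost_eq_sum (w : Option α → Option α → ℝ≥0) (X Y : List (Paren α)) :
    ∀ path : List (ℕ × ℕ), pathCost w X Y path =
      ∑ t ∈ range (path.length - 1), stepCost w X Y (vertex path t) (vertex path (t + 1))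
  | [] => by simp [pathCost]
  | [_] => by simp [pathCost]
  | p :: q :: rest => by
    rw [pathCost, pathCost_eq_sum w X Y (q :: rest)]
    simp only [List.length_cons, Nat.add_sub_cancel]
    rw [sum_range_succ', add_comm]
    rfl

noncomputable def expensiveEdges (w : Option α → Option α → ℝ≥0) (X Y : List (Paren α))
    (path : List (ℕ × ℕ)) : Finset ℕ :=
  (range (path.length - 1)).filter fun t =>
    1 / 2 ≤ stepCost w X Y (vertex path t) (vertex path (t + 1))

lemma card_expensiveEdges_le {k : ℕ} (hcost : pathCost w X Y path ≤ k) :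
    (expensiveEdges w X Y path).card ≤ 2 * k := by
  have hsum : ((expensiveEdges w X Y path).card : ℝ≥0) * (1 / 2) ≤ k := calc
    _ = ∑ _t ∈ expensiveEdges w X Y path, (1 / 2 : ℝ≥0) := by rw [sum_const, nsmul_eq_mul]
    _ ≤ ∑ t ∈ expensiveEdges w X Y path, stepCost w X Y (vertex path t) (vertex path (t + 1)) :=
      sum_le_sum fun t ht => (mem_filter.mp ht).2
    _ ≤ ∑ t ∈ range (path.length - 1), stepCost w X Y (vertex path t) (vertex path (t + 1)) :=
      sum_le_sum_of_subset (filter_subset _ _)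
    _ ≤ k := pathCost_eq_sum w X Y path ▸ hcost
  have : ((expensiveEdges w X Y path).card : ℝ≥0) ≤ ((2 * k : ℕ) : ℝ≥0) := by
    push_cast
    linear_combination 2 * hsum
  exact_mod_cast this

lemma one_half_le_half_mul (hw : Normalized w) {a b : Option α} (h : a ≠ b) :
    1 / 2 ≤ (1 / 2 : ℝ≥0) * w a b :=
  le_mul_of_one_le_right zero_le (hw.2 a b h)

lemma lbl_ne_none {i : ℕ} (h : i < X.length) : lbl X i ≠ none := by
  simp [lbl, List.getElem?_eq_getElem h]

namespace IsAlignment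

variable {x x' y y' t : ℕ}

lemma vertex_zero (hpath : IsAlignment x x' y y' path) : vertex path 0 = (x, y) := by
  have h := hpath.1
  rw [List.head?_eq_getElem?] at h
  exact (vertex_eq_of_getElem? h).2

lemma vertex_last (hpath : IsAlignment x x' y y' path) :
    path.length - 1 < path.length ∧ vertex path (path.length - 1) = (x', y') := by
  have h := hpath.2.1
  rw [List.getLast?_eq_getElem?] at h
  exact vertex_eq_of_getElem? h

lemma vertex_le (hpath : IsAlignment x x' y y' path) (ht : t < path.length) :
    (vertex path t).1 ≤ x' ∧ (vertex path t).2 ≤ y' := by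
  have := vertex_mono hpath.2.2 (show t ≤ path.length - 1 by omega) hpath.vertex_last.1
  rwa [hpath.vertex_last.2] at this

lemma mem_expensiveEdges_of_horizontal (hw : Normalized w)
    (hpath : IsAlignment 0 X.length 0 Y.length path) (ht : t + 1 < path.length)
    (h : vertex path (t + 1) = ((vertex path t).1 + 1, (vertex path t).2)) :
    t ∈ expensiveEdges w X Y path := by
  have hX := (hpath.vertex_le ht).1
  rw [h] at hX
  refine mem_filter.mpr ⟨mem_range.mpr (by omega), ?_⟩
  rw [h, stepCost_horizontal]
  exact one_half_le_half_mul hw (lbl_ne_none (by simp at hX; omega))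

lemma diagonal_of_not_mem_expensiveEdges (hw : Normalized w)
    (hpath : IsAlignment 0 X.length 0 Y.length path) (ht : t + 1 < path.length)
    (hcheap : t ∉ expensiveEdges w X Y path)
    (hrow : (vertex path (t + 1)).2 = (vertex path t).2 + 1) :
    vertex path (t + 1) = ((vertex path t).1 + 1, (vertex path t).2 + 1) ∧
      lbl X (vertex path t).1 = lbl Y (vertex path t).2 := by
  have hexp : ¬ 1 / 2 ≤ stepCost w X Y (vertex path t) (vertex path (t + 1)) :=
    fun h => hcheap (mem_filter.mpr ⟨mem_range.mpr (by omega), h⟩)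
  rcases alignStep_vertex hpath.2.2 ht with h | h | h
  · rw [h] at hrow; simp at hrow
  · have hY := (hpath.vertex_le ht).2
    rw [h] at hY hexp
    rw [stepCost_vertical] at hexp
    exact absurd (one_half_le_half_mul hw (lbl_ne_none (by simp at hY; omega)).symm) hexp
  · refine ⟨h, by_contra fun hne => hexp ?_⟩
    rw [h, stepCost_diagonal]
    exact one_half_le_half_mul hw hne

lemma fst_le_snd_add (hw : Normalized w) (hpath : IsAlignment 0 X.length 0 Y.length path)
    {k : ℕ} (hcost : pathCost w X Y path ≤ k) (ht : t < path.length) :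
    (vertex path t).1 ≤ (vertex path t).2 + 2 * k := by
  suffices h : (vertex path t).1 ≤ (vertex path t).2 +
      ((range t).filter (· ∈ expensiveEdges w X Y path)).card from
    h.trans (Nat.add_le_add_left ((card_le_card fun u hu => (mem_filter.mp hu).2).trans
      (card_expensiveEdges_le hcost)) _)
  induction t with
  | zero => simp [hpath.vertex_zero]
  | succ t ih =>
    have ih := ih (by omega)
    have hmono : ((range t).filter (· ∈ expensiveEdges w X Y path)).card ≤
        ((range (t + 1)).filter (· ∈ expensiveEdges w X Y path)).card :=
      card_le_card (filter_subset_filter _ (range_subset_range.mpr t.le_succ))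
    rcases alignStep_vertex hpath.2.2 ht with h | h | h
    · rw [range_add_one, filter_insert,
        if_pos (hpath.mem_expensiveEdges_of_horizontal hw ht h), card_insert_of_notMem (by simp),
        h]
      simp only
      omega
    all_goals rw [h]; simp only; omega

end IsAlignment

end Cost

/-- Vertices that have entered the occurrence at `(x, y)` of a string of length `n` in one of the
two strings and not yet left it in both; these are the vertices between the indices `a` and `b` of
the theorem. -/
def InWindow (x y n : ℕ) (p : ℕ × ℕ) : Prop :=
  (x ≤ p.1 ∨ y ≤ p.2) ∧ (p.1 < x + n ∨ p.2 < y + n)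

structure IsAboveDiagonal (k : ℕ) (w : Option α → Option α → ℝ≥0)
    (P F1 F2 G1 G2 : List (Paren α)) (path : List (ℕ × ℕ)) : Prop where
  normalized : Normalized w
  isAlignment : IsAlignment 0 (F1 ++ P ++ F2).length 0 (G1 ++ P ++ G2).length path
  consistent : Consistent (F1 ++ P ++ F2) (G1 ++ P ++ G2) path
  cost_le : pathCost w (F1 ++ P ++ F2) (G1 ++ P ++ G2) path ≤ k
  above : ∀ p ∈ path, InWindow F1.length G1.length P.length p →
    (F1.length : ℤ) - G1.length < (p.1 : ℤ) - p.2

def CheapCrossing (w : Option α → Option α → ℝ≥0) (X Y : List (Paren α))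
    (path : List (ℕ × ℕ)) (y₀ j : ℕ) : Prop :=
  rowCross path (y₀ + j) ∉ expensiveEdges w X Y path

noncomputable def crossingColumn (path : List (ℕ × ℕ)) (x₀ y₀ j : ℕ) : ℕ :=
  (vertex path (rowCross path (y₀ + j))).1 - x₀

/-- Opening parentheses can only be aligned with opening ones, since otherwise their mates would be
aligned in the wrong order. -/
lemma getElem?_eq_of_alignsAt {P F1 F2 G1 G2 : List (Paren α)} {path : List (ℕ × ℕ)}
    (hch : path.IsChain AlignStep) (hcons : Consistent (F1 ++ P ++ F2) (G1 ++ P ++ G2) path)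
    (hP : IsForest P) {i j : ℕ} (hi : i < P.length) (hj : j < P.length)
    (hal : AlignsAt path (F1.length + i) (G1.length + j))
    (hlbl : lbl (F1 ++ P ++ F2) (F1.length + i) = lbl (G1 ++ P ++ G2) (G1.length + j)) :
    P[i]? = P[j]? := by
  obtain ⟨m, hm⟩ := hP.exists_mateRel i hi
  obtain ⟨m', hm'⟩ := hP.exists_mateRel j hj
  have hal' := hcons _ _ _ _ hal (hm.append F1 F2) (hm'.append G1 G2)
  have hiff : i < m ↔ j < m' := by
    constructor <;> intro hlt
    · exact Nat.lt_of_add_lt_add_left (hal.lt_and_lt hch hal' (by omega)).2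
    · exact Nat.lt_of_add_lt_add_left (hal.lt_and_lt hch hal' (by omega)).1
  rw [hm.lt_iff, hm'.lt_iff] at hiff
  simp only [lbl, getElem?_append_append hi, getElem?_append_append hj] at hlbl
  rw [List.getElem?_eq_getElem hi, List.getElem?_eq_getElem hj] at hiff hlbl ⊢
  simp only [Option.map_some, Option.some_inj] at hiff hlbl ⊢
  exact Prod.ext (Bool.eq_iff_iff.mpr hiff) hlbl

namespace IsAboveDiagonal

variable {k : ℕ} {w : Option α → Option α → ℝ≥0} {P F1 F2 G1 G2 : List (Paren α)}
  {path : List (ℕ × ℕ)}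

lemma lt_of_alignsAt (h : IsAboveDiagonal k w P F1 F2 G1 G2 path) {iF iG : ℕ}
    (hiF : iF < P.length) (hal : AlignsAt path (F1.length + iF) (G1.length + iG)) : iG < iF := by
  obtain ⟨t, ht, -⟩ := hal
  have := h.above _ (List.mem_of_getElem? ht) ⟨Or.inl (by simp), Or.inl (by simp; omega)⟩
  push_cast at this
  omega

lemma mate_lt (h : IsAboveDiagonal k w P F1 F2 G1 G2 path) {iF iG m m' : ℕ}
    (hal : AlignsAt path (F1.length + iF) (G1.length + iG)) (hm : MateRel P iG m)
    (hm' : MateRel P iF m') : m < m' :=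
  h.lt_of_alignsAt hm'.lt_length (h.consistent _ _ _ _ hal (hm'.append F1 F2) (hm.append G1 G2))

lemma rowCross_spec (h : IsAboveDiagonal k w P F1 F2 G1 G2 path) {j : ℕ} (hj : j < P.length) :
    rowCross path (G1.length + j) + 1 < path.length ∧
      (vertex path (rowCross path (G1.length + j))).2 = G1.length + j ∧
      (vertex path (rowCross path (G1.length + j) + 1)).2 = G1.length + j + 1 := by
  have hlast := h.isAlignment.vertex_last.2
  refine _root_.rowCross_spec h.isAlignment.2.2 (by simp [h.isAlignment.vertex_zero])
    (t := path.length - 1) ?_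
  rw [hlast]
  simp only [List.length_append]
  omega

lemma crossingColumn_spec (h : IsAboveDiagonal k w P F1 F2 G1 G2 path)
    (hgl : G1.length ≤ F1.length + 2 * k) {j : ℕ} (hj : j < P.length) :
    F1.length + crossingColumn path F1.length G1.length j =
        (vertex path (rowCross path (G1.length + j))).1 ∧
      j < crossingColumn path F1.length G1.length j ∧
      crossingColumn path F1.length G1.length j ≤ j + 4 * k := by
  obtain ⟨hlen, hrow, -⟩ := h.rowCross_spec hj
  have habove := h.above _ (vertex_mem (t := rowCross path (G1.length + j)) (by omega))
    ⟨Or.inr (by omega), Or.inr (by omega)⟩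
  have hle := h.isAlignment.fst_le_snd_add (t := rowCross path (G1.length + j)) h.normalized
    h.cost_le (by omega)
  rw [hrow] at habove hle
  unfold crossingColumn
  omega

lemma alignsAt_of_cheapCrossing (h : IsAboveDiagonal k w P F1 F2 G1 G2 path)
    (hgl : G1.length ≤ F1.length + 2 * k) {j : ℕ} (hj : j < P.length)
    (hcheap : CheapCrossing w (F1 ++ P ++ F2) (G1 ++ P ++ G2) path G1.length j) :
    AlignsAt path (F1.length + crossingColumn path F1.length G1.length j) (G1.length + j) ∧
      lbl (F1 ++ P ++ F2) (F1.length + crossingColumn path F1.length G1.length j) =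
        lbl (G1 ++ P ++ G2) (G1.length + j) := by
  obtain ⟨hlen, hrow, hrow₁⟩ := h.rowCross_spec hj
  obtain ⟨hcol, -⟩ := h.crossingColumn_spec hgl hj
  set T := rowCross path (G1.length + j)
  obtain ⟨hdiag, hlbl⟩ := h.isAlignment.diagonal_of_not_mem_expensiveEdges h.normalized hlen
    hcheap (by rw [hrow, hrow₁])
  rw [hcol, ← hrow]
  refine ⟨⟨_, getElem?_eq_some_vertex (by omega), ?_⟩, hlbl⟩
  rw [getElem?_eq_some_vertex hlen, hdiag]

lemma getElem?_crossingColumn (h : IsAboveDiagonal k w P F1 F2 G1 G2 path) (hP : IsForest P)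
    (hgl : G1.length ≤ F1.length + 2 * k) {j : ℕ} (hj : j < P.length)
    (hcheap : CheapCrossing w (F1 ++ P ++ F2) (G1 ++ P ++ G2) path G1.length j)
    (hσ : crossingColumn path F1.length G1.length j < P.length) :
    P[crossingColumn path F1.length G1.length j]? = P[j]? :=
  getElem?_eq_of_alignsAt h.isAlignment.2.2 h.consistent hP hσ hj
    (h.alignsAt_of_cheapCrossing hgl hj hcheap).1 (h.alignsAt_of_cheapCrossing hgl hj hcheap).2

lemma isForwardMatching (h : IsAboveDiagonal k w P F1 F2 G1 G2 path) (hP : IsForest P)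
    (hgl : G1.length ≤ F1.length + 2 * k) :
    IsForwardMatching k P (CheapCrossing w (F1 ++ P ++ F2) (G1 ++ P ++ G2) path G1.length)
      (crossingColumn path F1.length G1.length) where
  lt_shift _ hj _ := (h.crossingColumn_spec hgl hj).2.1
  shift_le _ hj _ := (h.crossingColumn_spec hgl hj).2.2
  getElem?_shift _ hj hcheap hσ := h.getElem?_crossingColumn hP hgl hj hcheap hσ
  mate_lt _ hj hcheap _ _ _ hm hm' :=
    h.mate_lt (h.alignsAt_of_cheapCrossing hgl hj hcheap).1 hm hm'

lemma horizontal_of_crossingColumn_ne (h : IsAboveDiagonal k w P F1 F2 G1 G2 path)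
    (hgl : G1.length ≤ F1.length + 2 * k) {j : ℕ} (hj : j + 1 < P.length)
    (hcheap : CheapCrossing w (F1 ++ P ++ F2) (G1 ++ P ++ G2) path G1.length j)
    (hne : crossingColumn path F1.length G1.length (j + 1) ≠
      crossingColumn path F1.length G1.length j + 1) :
    rowCross path (G1.length + j) + 1 + 1 < path.length ∧
      vertex path (rowCross path (G1.length + j) + 1 + 1) =
        ((vertex path (rowCross path (G1.length + j) + 1)).1 + 1,
          (vertex path (rowCross path (G1.length + j) + 1)).2) := by
  have hch := h.isAlignment.2.2
  obtain ⟨hlen, hrow, hrow₁⟩ := h.rowCross_spec (j := j) (by omega)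
  obtain ⟨hlen', hrow', -⟩ := h.rowCross_spec hj
  obtain ⟨hcol, -⟩ := h.crossingColumn_spec hgl (j := j) (by omega)
  obtain ⟨hcol', -⟩ := h.crossingColumn_spec hgl hj
  obtain ⟨hdiag, -⟩ := h.isAlignment.diagonal_of_not_mem_expensiveEdges h.normalized hlen
    hcheap (by rw [hrow, hrow₁])
  set T := rowCross path (G1.length + j)
  set T' := rowCross path (G1.length + (j + 1))
  have hTT : T + 1 < T' := by
    have hlt : T < T' := by
      by_contra! hle
      have := (vertex_mono hch hle (by omega)).2
      omega
    refine Nat.lt_of_le_of_ne hlt fun heq => hne ?_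
    have := congrArg Prod.fst hdiag
    rw [← heq] at hcol'
    simp only at this
    omega
  have hmid := (vertex_mono hch (show T + 1 + 1 ≤ T' by omega) (by omega)).2
  refine ⟨by omega, ?_⟩
  rcases alignStep_vertex hch (show T + 1 + 1 < path.length by omega) with hs | hs | hs <;>
    rw [hs] at hmid ⊢ <;> simp only at hmid ⊢ <;> omega

lemma card_defects_le (h : IsAboveDiagonal k w P F1 F2 G1 G2 path)
    (hgl : G1.length ≤ F1.length + 2 * k) :
    (defects P.length (CheapCrossing w (F1 ++ P ++ F2) (G1 ++ P ++ G2) path G1.length)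
      (crossingColumn path F1.length G1.length)).card ≤ 2 * k := by
  set cheap := CheapCrossing w (F1 ++ P ++ F2) (G1 ++ P ++ G2) path G1.length
  set T := fun j => rowCross path (G1.length + j)
  -- a defect at `j` is charged to the crossing of row `j` if it is expensive, and otherwise to
  -- the horizontal step right after it
  have hcharge : ∀ j ∈ defects P.length cheap (crossingColumn path F1.length G1.length),
      let t := if cheap j then T j + 1 else T j
      t ∈ expensiveEdges w (F1 ++ P ++ F2) (G1 ++ P ++ G2) path ∧
        (vertex path t).2 = G1.length + j + (if cheap j then 1 else 0) ∧
        ((vertex path (t + 1)).2 = (vertex path t).2 ↔ cheap j) := by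
    intro j hj
    obtain ⟨hjP, hdef⟩ := mem_filter.mp hj
    obtain ⟨hlen, hrow, hrow₁⟩ := h.rowCross_spec (mem_range.mp hjP)
    by_cases hc : cheap j
    · obtain ⟨hj', hne⟩ := hdef.resolve_left (not_not.mpr hc)
      obtain ⟨hlen', hhor⟩ := h.horizontal_of_crossingColumn_ne hgl hj' hc hne
      simp only [hc, if_true]
      exact ⟨h.isAlignment.mem_expensiveEdges_of_horizontal h.normalized hlen' hhor,
        by simp [T, hrow₁], by simp only [T]; rw [hhor]; simp⟩
    · simp only [hc, if_false]
      exact ⟨not_not.mp hc, by simp [T, hrow], by simp [T, hrow, hrow₁]⟩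
  refine (card_le_card_of_injOn _ (fun j hj => (hcharge j hj).1)
    fun j hj j' hj' heq => ?_).trans (card_expensiveEdges_le h.cost_le)
  obtain ⟨-, hrow, hhor⟩ := hcharge j hj
  obtain ⟨-, hrow', hhor'⟩ := hcharge j' hj'
  rw [heq] at hrow hhor
  have hcc : cheap j ↔ cheap j' := hhor.symm.trans hhor'
  by_cases hc : cheap j
  · simp only [hc, hcc.mp hc, if_true] at hrow hrow'
    omega
  · simp only [hc, hcc.not.mp hc, if_false] at hrow hrow'
    omega

lemma redCount_le (h : IsAboveDiagonal k w P F1 F2 G1 G2 path) (hP : IsForest P)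
    (hgl : G1.length ≤ F1.length + 2 * k) : redCount k P ≤ 46 * k + 2 * k * (42 * k + 1) :=
  ((h.isForwardMatching hP hgl).redCount_le hP).trans
    (Nat.add_le_add_left (Nat.mul_le_mul_right _ (h.card_defects_le hgl)) _)

end IsAboveDiagonal

section Swap

variable {path : List (ℕ × ℕ)}

lemma AlignStep.swap {p q : ℕ × ℕ} (h : AlignStep p q) : AlignStep p.swap q.swap := by
  rcases h with rfl | rfl | rfl <;> simp [AlignStep]

lemma vertex_map_swap (t : ℕ) : vertex (path.map Prod.swap) t = (vertex path t).swap := by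
  simp only [vertex, List.getD_eq_getElem?_getD, List.getElem?_map]
  cases path[t]? <;> rfl

lemma AlignsAt.of_map_swap {f g : ℕ} (h : AlignsAt (path.map Prod.swap) f g) :
    AlignsAt path g f := by
  obtain ⟨t, h₁, h₂⟩ := h
  simp only [List.getElem?_map, Option.map_eq_some_iff] at h₁ h₂
  obtain ⟨p, hp, hp'⟩ := h₁
  obtain ⟨q, hq, hq'⟩ := h₂
  refine ⟨t, ?_, ?_⟩
  · rw [hp, ← Prod.swap_swap p, hp']; rfl
  · rw [hq, ← Prod.swap_swap q, hq']; rfl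

lemma AlignsAt.map_swap {f g : ℕ} (h : AlignsAt path f g) :
    AlignsAt (path.map Prod.swap) g f := by
  obtain ⟨t, h₁, h₂⟩ := h
  exact ⟨t, by simp [h₁], by simp [h₂]⟩

lemma IsAlignment.map_swap {x x' y y' : ℕ} (h : IsAlignment x x' y y' path) :
    IsAlignment y y' x x' (path.map Prod.swap) :=
  ⟨by simp [h.1], by simp [h.2.1],
    List.isChain_map_of_isChain Prod.swap (fun _ _ => AlignStep.swap) h.2.2⟩

lemma Consistent.map_swap {X Y : List (Paren α)} (h : Consistent X Y path) :
    Consistent Y X (path.map Prod.swap) :=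
  fun _ _ _ _ hal hmY hmX => (h _ _ _ _ hal.of_map_swap hmX hmY).map_swap

lemma stepCost_swap (w : Option α → Option α → ℝ≥0) (X Y : List (Paren α)) (p q : ℕ × ℕ) :
    stepCost (fun u v => w v u) Y X p.swap q.swap = stepCost w X Y p q := by
  unfold stepCost
  simp only [Prod.fst_swap, Prod.snd_swap]
  split_ifs <;> first | rfl | omega

lemma pathCost_map_swap (w : Option α → Option α → ℝ≥0) (X Y : List (Paren α)) :
    pathCost (fun u v => w v u) Y X (path.map Prod.swap) = pathCost w X Y path := by
  simp only [pathCost_eq_sum, List.length_map, vertex_map_swap, stepCost_swap]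

lemma Normalized.swap {w : Option α → Option α → ℝ≥0} (hw : Normalized w) :
    Normalized fun u v => w v u :=
  ⟨hw.1, fun a b h => hw.2 b a h.symm⟩

lemma inWindow_swap {x y n : ℕ} {p : ℕ × ℕ} : InWindow y x n p.swap ↔ InWindow x y n p := by
  simp only [InWindow, Prod.fst_swap, Prod.snd_swap, or_comm]

lemma IsAboveDiagonal.of_below {k : ℕ} {w : Option α → Option α → ℝ≥0}
    {P F1 F2 G1 G2 : List (Paren α)} (hw : Normalized w)
    (hpath : IsAlignment 0 (F1 ++ P ++ F2).length 0 (G1 ++ P ++ G2).length path)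
    (hcons : Consistent (F1 ++ P ++ F2) (G1 ++ P ++ G2) path)
    (hcost : pathCost w (F1 ++ P ++ F2) (G1 ++ P ++ G2) path ≤ k)
    (hbelow : ∀ p ∈ path, InWindow F1.length G1.length P.length p →
      (p.1 : ℤ) - p.2 < (F1.length : ℤ) - G1.length) :
    IsAboveDiagonal k (fun u v => w v u) P G1 G2 F1 F2 (path.map Prod.swap) where
  normalized := hw.swap
  isAlignment := hpath.map_swap
  consistent := hcons.map_swap
  cost_le := (pathCost_map_swap w _ _).trans_le hcost
  above p hp hwin := by
    obtain ⟨q, hq, rfl⟩ := List.mem_map.mp hp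
    have := hbelow q hq (inWindow_swap.mp hwin)
    simp only [Prod.fst_swap, Prod.snd_swap]
    omega

end Swap

lemma forall_lt_or_forall_gt_of_ne {f : ℕ → ℤ} {a b : ℕ} {c : ℤ}
    (hstep : ∀ t, a ≤ t → t < b → f t - 1 ≤ f (t + 1) ∧ f (t + 1) ≤ f t + 1)
    (hne : ∀ t, a ≤ t → t ≤ b → f t ≠ c) :
    (∀ t, a ≤ t → t ≤ b → c < f t) ∨ (∀ t, a ≤ t → t ≤ b → f t < c) := by
  have hsame : ∀ t, a ≤ t → t ≤ b → (f t < c ↔ f a < c) := by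
    intro t hat
    induction t, hat using Nat.le_induction with
    | base => exact fun _ => Iff.rfl
    | succ t hat ih =>
      intro htb
      have := hstep t hat (by omega)
      have := hne t hat (by omega)
      have := hne (t + 1) (by omega) htb
      rw [← ih (by omega)]
      omega
  by_cases ha : f a < c
  · exact Or.inr fun t hat htb => (hsame t hat htb).mpr ha
  · refine Or.inl fun t hat htb => ?_
    have := hne t hat htb
    have := (hsame t hat htb).not.mpr ha
    omega

lemma inWindow_side_of_ne {path : List (ℕ × ℕ)} (hch : path.IsChain AlignStep)
    {x y n a b : ℕ} {pb : ℕ × ℕ}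
    (hamin : ∀ t, t < a → ∀ p : ℕ × ℕ, path[t]? = some p → ¬(x ≤ p.1 ∨ y ≤ p.2))
    (hpb : path[b]? = some pb) (hpbP : x + n ≤ pb.1 ∧ y + n ≤ pb.2)
    (hne : ∀ t p, a ≤ t → t ≤ b → path[t]? = some (p : ℕ × ℕ) →
      (p.1 : ℤ) - p.2 ≠ (x : ℤ) - y) :
    (∀ p ∈ path, InWindow x y n p → (x : ℤ) - y < (p.1 : ℤ) - p.2) ∨
      (∀ p ∈ path, InWindow x y n p → (p.1 : ℤ) - p.2 < (x : ℤ) - y) := by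
  obtain ⟨hb, hvb⟩ := vertex_eq_of_getElem? hpb
  have hwindow : ∀ p ∈ path, InWindow x y n p → ∃ t, a ≤ t ∧ t ≤ b ∧ vertex path t = p := by
    intro p hp hwin
    obtain ⟨t, ht, hp⟩ := List.getElem_of_mem hp
    have hpt : path[t]? = some p := List.getElem?_eq_some_iff.mpr ⟨ht, hp⟩
    have hvt := (vertex_eq_of_getElem? hpt).2
    refine ⟨t, not_lt.mp fun hlt => hamin t hlt p hpt hwin.1, not_lt.mp fun hlt => ?_, hvt⟩
    have := vertex_mono hch hlt.le ht
    rw [hvb, hvt] at this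
    have := hwin.2
    omega
  have hside := forall_lt_or_forall_gt_of_ne
    (f := fun t => ((vertex path t).1 : ℤ) - (vertex path t).2) (c := (x : ℤ) - y) (a := a) (b := b)
    (fun t _ htb => by rcases alignStep_vertex hch (show t + 1 < path.length by omega) with
      h | h | h <;> rw [h] <;> push_cast <;> constructor <;> linarith)
    (fun t hat htb => hne t _ hat htb (getElem?_eq_some_vertex (by omega)))
  refine hside.imp (fun h p hp hwin => ?_) (fun h p hp hwin => ?_) <;>
    obtain ⟨t, hat, htb, rfl⟩ := hwindow p hp hwin <;> exact h t hat htb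

end

theorem alignment_crosses_diagonal_general {α : Type*} (k : ℕ) (hk : 0 < k)
    (w : Option α → Option α → ℝ≥0) (hw : Normalized w)
    (P F1 F2 G1 G2 : List (Paren α)) (hP : IsForest P)
    (hred : 158 * k ^ 2 ≤ redCount k P)
    (hlg : F1.length ≤ G1.length + 2 * k) (hgl : G1.length ≤ F1.length + 2 * k)
    (path : List (ℕ × ℕ))
    (hpath : IsAlignment 0 (F1 ++ P ++ F2).length 0 (G1 ++ P ++ G2).length path)
    (hcons : Consistent (F1 ++ P ++ F2) (G1 ++ P ++ G2) path)
    (hcost : pathCost w (F1 ++ P ++ F2) (G1 ++ P ++ G2) path ≤ (k : ℝ≥0))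
    (a b : ℕ) (pb : ℕ × ℕ)
    (hamin : ∀ t, t < a → ∀ p : ℕ × ℕ, path[t]? = some p →
      ¬(F1.length ≤ p.1 ∨ G1.length ≤ p.2))
    (hpb : path[b]? = some pb)
    (hpbP : F1.length + P.length ≤ pb.1 ∧ G1.length + P.length ≤ pb.2) :
    ∃ t p, a ≤ t ∧ t ≤ b ∧ path[t]? = some (p : ℕ × ℕ) ∧
      (p.1 : ℤ) - (p.2 : ℤ) = (F1.length : ℤ) - (G1.length : ℤ) := by
  by_contra! hne
  have hfew : ¬ redCount k P ≤ 46 * k + 2 * k * (42 * k + 1) := by nlinarith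
  rcases inWindow_side_of_ne hpath.2.2 hamin hpb hpbP hne with habove | hbelow
  · exact hfew (IsAboveDiagonal.redCount_le ⟨hw, hpath, hcons, hcost, habove⟩ hP hgl)
  · exact hfew ((IsAboveDiagonal.of_below hw hpath hcons hcost hbelow).redCount_le hP hlg)

/-- Claim C.8: let `P` be a forest with at least `158k²` red
characters occurring in `F = F₁·P·F₂` at position `p_F = |F₁|` and in
`G = G₁·P·G₂` at position `p_G = |G₁|` with `|p_F − p_G| ≤ 2k`. If `A` is a
forest alignment of `F` onto `G` of cost at most `k`, `a` is the smallest index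
of `A` with `f_a ≥ p_F` or `g_a ≥ p_G`, and `b` is the smallest index with
`f_b ≥ p_F + |P|` and `g_b ≥ p_G + |P|`, then some `t ∈ [a..b]` satisfies
`f_t − g_t = p_F − p_G`. -/
theorem alignment_crosses_diagonal {α : Type*} (k : ℕ) (hk : 0 < k)
    (w : Option α → Option α → ℝ≥0) (hw : Normalized w) (hq : Quasimetric w)
    (P F1 F2 G1 G2 : List (Paren α)) (hP : IsForest P)
    (hred : 158 * k ^ 2 ≤ redCount k P)
    (hF : IsForest (F1 ++ P ++ F2)) (hG : IsForest (G1 ++ P ++ G2))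
    (hlg : F1.length ≤ G1.length + 2 * k) (hgl : G1.length ≤ F1.length + 2 * k)
    (path : List (ℕ × ℕ))
    (hpath : IsAlignment 0 (F1 ++ P ++ F2).length 0 (G1 ++ P ++ G2).length path)
    (hcons : Consistent (F1 ++ P ++ F2) (G1 ++ P ++ G2) path)
    (hcost : pathCost w (F1 ++ P ++ F2) (G1 ++ P ++ G2) path ≤ (k : ℝ≥0))
    (a b : ℕ) (pa pb : ℕ × ℕ)
    (hpa : path[a]? = some pa) (hpaP : F1.length ≤ pa.1 ∨ G1.length ≤ pa.2)
    (hamin : ∀ t, t < a → ∀ p : ℕ × ℕ, path[t]? = some p →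
      ¬(F1.length ≤ p.1 ∨ G1.length ≤ p.2))
    (hpb : path[b]? = some pb)
    (hpbP : F1.length + P.length ≤ pb.1 ∧ G1.length + P.length ≤ pb.2)
    (hbmin : ∀ t, t < b → ∀ p : ℕ × ℕ, path[t]? = some p →
      ¬(F1.length + P.length ≤ p.1 ∧ G1.length + P.length ≤ p.2)) :
    ∃ t p, a ≤ t ∧ t ≤ b ∧ path[t]? = some (p : ℕ × ℕ) ∧
      (p.1 : ℤ) - (p.2 : ℤ) = (F1.length : ℤ) - (G1.length : ℤ) :=
  alignment_crosses_diagonal_general k hk w hw P F1 F2 G1 G2 hP hred hlg hgl path hpath hcons hcost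
    a b pb hamin hpb hpbP
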